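/- arXiv:2104.04624 — 4 statements merged into one kernel-verified Lean document; each statement's English description precedes it below -/
import Mathlib

section
/- If every vertex of a bipartite simple graph has at most k neighbors, then the graph has a proper edge coloring using k colors. -/
/-!
Induction on the edges, each written as a pair `(a, b)` with `a` in one part and `b` in the
other. To add `(a₀, b₀)`, choose a colour `α` missing at `a₀` and a colour `β` missing at `b₀`;
both exist because each endpoint carries fewer than `k` coloured edges. Swapping `α` and `β`
along the alternating path that leaves `b₀` by an `α`-edge keeps the colouring proper and frees
`α` at `b₀`. It keeps `α` free at `a₀`: that path enters the part of `a₀` only through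
`α`-edges, and `a₀` has none.
-/

/-- A proper edge coloring of a simple graph: distinct edges sharing an endpoint
get different colors. -/
def IsProperEdgeColoring {V α : Type*} (G : SimpleGraph V) (c : G.edgeSet → α) : Prop :=
  ∀ e₁ e₂ : G.edgeSet, e₁ ≠ e₂ →
    (∃ v, v ∈ (e₁ : Sym2 V) ∧ v ∈ (e₂ : Sym2 V)) → c e₁ ≠ c e₂

open Finset

section BipartiteColoring

variable {A B C : Type*}

/-- A finset `E ⊆ A × B` is read as the edge set of a bipartite graph with parts `A` and `B`;
two edges share an endpoint iff they agree in the first or in the second coordinate. -/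
def IsProperColoringOn (E : Finset (A × B)) (c : A × B → C) : Prop :=
  ∀ e₁ ∈ E, ∀ e₂ ∈ E, (e₁.1 = e₂.1 ∨ e₁.2 = e₂.2) → c e₁ = c e₂ → e₁ = e₂

theorem IsProperColoringOn.insert_update [DecidableEq A] [DecidableEq B] {E : Finset (A × B)}
    {c : A × B → C} {e₀ : A × B} {α : C} (hc : IsProperColoringOn E c) (he₀ : e₀ ∉ E)
    (hfree : ∀ e ∈ E, (e.1 = e₀.1 ∨ e.2 = e₀.2) → c e ≠ α) :
    IsProperColoringOn (insert e₀ E) (Function.update c e₀ α) := by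
  have hne : ∀ e ∈ E, e ≠ e₀ := fun e he h => he₀ (h ▸ he)
  intro e₁ he₁ e₂ he₂ hadj heq
  rcases mem_insert.1 he₁ with rfl | h₁ <;> rcases mem_insert.1 he₂ with rfl | h₂
  · rfl
  · rw [Function.update_self, Function.update_of_ne (hne e₂ h₂)] at heq
    exact absurd heq.symm (hfree e₂ h₂ (hadj.imp Eq.symm Eq.symm))
  · rw [Function.update_self, Function.update_of_ne (hne e₁ h₁)] at heq
    exact absurd heq (hfree e₁ h₁ hadj)
  · rw [Function.update_of_ne (hne e₁ h₁), Function.update_of_ne (hne e₂ h₂)] at heq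
    exact hc e₁ h₁ e₂ h₂ hadj heq

variable (E : Finset (A × B)) (c : A × B → C) (α β : C) (b₀ : B)

inductive KempeReach : A ⊕ B → Prop
  | base : KempeReach (.inr b₀)
  | inl {a : A} {b : B} : KempeReach (.inr b) → (a, b) ∈ E → c (a, b) = α → KempeReach (.inl a)
  | inr {a : A} {b : B} : KempeReach (.inl a) → (a, b) ∈ E → c (a, b) = β → KempeReach (.inr b)

/-- An edge is taken to lie on the chain when its endpoint in `B` is reached; for `α`- and
`β`-edges this agrees with its endpoint in `A` being reached (`kempeReach_inl_iff_inr`). -/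
noncomputable def kempeSwap [DecidableEq C] (e : A × B) : C :=
  open Classical in
  if KempeReach E c α β b₀ (.inr e.2) then Equiv.swap α β (c e) else c e

variable {E c α β b₀}

theorem KempeReach.exists_of_inl {a : A} (h : KempeReach E c α β b₀ (.inl a)) :
    ∃ b, (a, b) ∈ E ∧ c (a, b) = α ∧ KempeReach E c α β b₀ (.inr b) := by
  cases h with
  | inl h hm hc => exact ⟨_, hm, hc, h⟩

section

variable (hc : IsProperColoringOn E c) (hβ : ∀ e ∈ E, e.2 = b₀ → c e ≠ β)
include hc hβ

theorem kempeReach_inl_iff_inr {a : A} {b : B} (hab : (a, b) ∈ E)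
    (hcol : c (a, b) = α ∨ c (a, b) = β) :
    KempeReach E c α β b₀ (.inl a) ↔ KempeReach E c α β b₀ (.inr b) := by
  constructor
  · intro h
    rcases hcol with hα | hβab
    · obtain ⟨b', hb', hcb', hr⟩ := h.exists_of_inl
      obtain rfl : b' = b := congrArg Prod.snd (hc _ hb' _ hab (.inl rfl) (hcb'.trans hα.symm))
      exact hr
    · exact h.inr hab hβab
  · intro h
    rcases hcol with hα | hβab
    · exact h.inl hab hα
    · cases h with
      | base => exact absurd hβab (hβ _ hab rfl)
      | inr h hm hcm =>
        obtain rfl := congrArg Prod.fst (hc _ hm _ hab (.inr rfl) (hcm.trans hβab.symm))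
        exact h

theorem kempeReach_inr_iff_of_adj {e₁ e₂ : A × B} (he₁ : e₁ ∈ E) (he₂ : e₂ ∈ E)
    (hadj : e₁.1 = e₂.1 ∨ e₁.2 = e₂.2) (hcol₁ : c e₁ = α ∨ c e₁ = β)
    (hcol₂ : c e₂ = α ∨ c e₂ = β) :
    KempeReach E c α β b₀ (.inr e₁.2) ↔ KempeReach E c α β b₀ (.inr e₂.2) := by
  rcases hadj with hrow | hcol
  · rw [← kempeReach_inl_iff_inr hc hβ he₁ hcol₁, ← kempeReach_inl_iff_inr hc hβ he₂ hcol₂, hrow]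
  · rw [hcol]

theorem kempeReach_inr_of_swap_apply_eq [DecidableEq C] {e₁ e₂ : A × B} (he₁ : e₁ ∈ E)
    (he₂ : e₂ ∈ E) (hadj : e₁.1 = e₂.1 ∨ e₁.2 = e₂.2) (hswap : Equiv.swap α β (c e₁) = c e₂)
    (hne : c e₁ ≠ c e₂) (h : KempeReach E c α β b₀ (.inr e₁.2)) :
    KempeReach E c α β b₀ (.inr e₂.2) := by
  have hcol₁ : c e₁ = α ∨ c e₁ = β :=
    (Equiv.swap_apply_ne_self_iff.1 (hswap.trans_ne hne.symm)).2
  have hcol₂ : c e₂ = α ∨ c e₂ = β := by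
    rw [← hswap]
    rcases hcol₁ with h₁ | h₁ <;> simp [h₁]
  exact (kempeReach_inr_iff_of_adj hc hβ he₁ he₂ hadj hcol₁ hcol₂).1 h

theorem isProperColoringOn_kempeSwap [DecidableEq C] :
    IsProperColoringOn E (kempeSwap E c α β b₀) := by
  intro e₁ he₁ e₂ he₂ hadj heq
  refine hc e₁ he₁ e₂ he₂ hadj ?_
  by_contra hne
  unfold kempeSwap at heq
  split_ifs at heq with h₁ h₂ h₂
  · exact hne ((Equiv.injective _) heq)
  · exact h₂ (kempeReach_inr_of_swap_apply_eq hc hβ he₁ he₂ hadj heq hne h₁)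
  · exact h₁ (kempeReach_inr_of_swap_apply_eq hc hβ he₂ he₁ (hadj.imp Eq.symm Eq.symm)
      heq.symm (Ne.symm hne) h₂)
  · exact hne heq

theorem kempeSwap_ne_of_fst_eq [DecidableEq C] {a₀ : A} (hα : ∀ e ∈ E, e.1 = a₀ → c e ≠ α)
    {e : A × B} (he : e ∈ E) (ha₀ : e.1 = a₀) : kempeSwap E c α β b₀ e ≠ α := by
  unfold kempeSwap
  split_ifs with h
  · rw [Ne, Equiv.swap_apply_eq_iff, Equiv.swap_apply_left]
    intro hβe
    obtain ⟨b, hb, hcb, -⟩ :=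
      ((kempeReach_inl_iff_inr hc hβ he (.inr hβe)).2 h).exists_of_inl
    exact hα _ hb ha₀ hcb
  · exact hα e he ha₀

end

theorem kempeSwap_ne_of_snd_eq [DecidableEq C] (hβ : ∀ e ∈ E, e.2 = b₀ → c e ≠ β)
    {e : A × B} (he : e ∈ E) (hb₀ : e.2 = b₀) : kempeSwap E c α β b₀ e ≠ α := by
  have h : KempeReach E c α β b₀ (.inr e.2) := hb₀ ▸ .base
  rw [kempeSwap, if_pos h, Ne, Equiv.swap_apply_eq_iff, Equiv.swap_apply_left]
  exact hβ e he hb₀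

theorem kempeSwap_mem [DecidableEq C] {S : Set C} {e : A × B} (he : c e ∈ S) (hα : α ∈ S)
    (hβ : β ∈ S) : kempeSwap E c α β b₀ e ∈ S := by
  unfold kempeSwap
  split_ifs
  · rw [Equiv.swap_apply_def]
    split_ifs <;> assumption
  · exact he

end BipartiteColoring

theorem exists_lt_forall_ne_of_card_filter_lt {X : Type*} {k : ℕ} (s : Finset X) (p : X → Prop)
    [DecidablePred p] (f : X → ℕ) (hs : #{x ∈ s | p x} < k) :
    ∃ α < k, ∀ x ∈ s, p x → f x ≠ α := by
  classical
  have hcard : #(image f {x ∈ s | p x}) < #(range k) :=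
    card_image_le.trans_lt (by rwa [card_range])
  obtain ⟨α, hαk, hα⟩ := exists_mem_notMem_of_card_lt_card hcard
  refine ⟨α, mem_range.1 hαk, fun x hx hpx hfx => hα ?_⟩
  exact mem_image.2 ⟨x, mem_filter.2 ⟨hx, hpx⟩, hfx⟩

theorem card_filter_lt_card_filter_insert {X : Type*} [DecidableEq X] (p : X → Prop)
    [DecidablePred p] {s : Finset X} {x : X} (hx : x ∉ s) (hpx : p x) :
    #{y ∈ s | p y} < #{y ∈ insert x s | p y} := by
  rw [filter_insert, if_pos hpx, card_insert_of_notMem (fun h => hx (mem_filter.1 h).1)]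
  exact Nat.lt_succ_self _

theorem exists_isProperColoringOn_lt {A B : Type*} [DecidableEq A] [DecidableEq B] {k : ℕ}
    (E : Finset (A × B)) (hfst : ∀ a, #{e ∈ E | e.1 = a} ≤ k)
    (hsnd : ∀ b, #{e ∈ E | e.2 = b} ≤ k) :
    ∃ c : A × B → ℕ, (∀ e ∈ E, c e < k) ∧ IsProperColoringOn E c := by
  induction E using Finset.induction_on with
  | empty => exact ⟨fun _ => 0, by simp, by simp [IsProperColoringOn]⟩
  | @insert e₀ E he₀ ih =>
    have hmono (p : A × B → Prop) [DecidablePred p] :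
        #{e ∈ E | p e} ≤ #{e ∈ insert e₀ E | p e} :=
      card_le_card (filter_subset_filter _ (subset_insert _ _))
    obtain ⟨c, hck, hc⟩ :=
      ih (fun a => (hmono _).trans (hfst a)) (fun b => (hmono _).trans (hsnd b))
    obtain ⟨α, hαk, hα⟩ := exists_lt_forall_ne_of_card_filter_lt E (·.1 = e₀.1) c
      ((card_filter_lt_card_filter_insert (·.1 = e₀.1) he₀ rfl).trans_le (hfst e₀.1))
    obtain ⟨β, hβk, hβ⟩ := exists_lt_forall_ne_of_card_filter_lt E (·.2 = e₀.2) c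
      ((card_filter_lt_card_filter_insert (·.2 = e₀.2) he₀ rfl).trans_le (hsnd e₀.2))
    refine ⟨Function.update (kempeSwap E c α β e₀.2) e₀ α, ?_,
      (isProperColoringOn_kempeSwap hc hβ).insert_update he₀ ?_⟩
    · intro e he
      rcases eq_or_ne e e₀ with rfl | hne
      · rwa [Function.update_self]
      · rw [Function.update_of_ne hne]
        exact kempeSwap_mem (S := Set.Iio k) (hck e ((mem_insert.1 he).resolve_left hne)) hαk hβk
    · rintro e he (hrow | hcol)
      · exact kempeSwap_ne_of_fst_eq hc hβ hα he hrow
      · exact kempeSwap_ne_of_snd_eq hβ he hcol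

namespace SimpleGraph

variable {V : Type*} {G : SimpleGraph V}

theorem card_filter_fst_eq_le_degree [Fintype V] [DecidableEq V] [DecidableRel G.Adj]
    {E : Finset (V × V)} (hE : ∀ p ∈ E, G.Adj p.1 p.2) (a : V) :
    #{p ∈ E | p.1 = a} ≤ G.degree a := by
  rw [← card_neighborFinset_eq_degree, ← card_map (Function.Embedding.sectR a V)]
  refine card_le_card fun p hp => ?_
  obtain ⟨hpE, rfl⟩ := mem_filter.1 hp
  exact mem_map.2 ⟨p.2, (mem_neighborFinset _ _ _).2 (hE p hpE), rfl⟩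

theorem card_filter_snd_eq_le_degree [Fintype V] [DecidableEq V] [DecidableRel G.Adj]
    {E : Finset (V × V)} (hE : ∀ p ∈ E, G.Adj p.1 p.2) (b : V) :
    #{p ∈ E | p.2 = b} ≤ G.degree b := by
  rw [← card_neighborFinset_eq_degree, ← card_map (Function.Embedding.sectL V b)]
  refine card_le_card fun p hp => ?_
  obtain ⟨hpE, rfl⟩ := mem_filter.1 hp
  exact mem_map.2 ⟨p.1, (mem_neighborFinset _ _ _).2 (hE p hpE).symm, rfl⟩

theorem exists_orientation_of_two_coloring {P : V → Bool} (hP : ∀ u v, G.Adj u v → P u ≠ P v)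
    {e : Sym2 V} (he : e ∈ G.edgeSet) :
    ∃ p : V × V, G.Adj p.1 p.2 ∧ P p.1 = true ∧ P p.2 = false ∧ s(p.1, p.2) = e := by
  induction e using Sym2.ind with
  | h u v =>
    have huv := hP u v he
    cases hu : P u
    · exact ⟨(v, u), he.symm, by simpa [hu] using huv.symm, hu, Sym2.eq_swap⟩
    · exact ⟨(u, v), he, hu, by simpa [hu] using huv.symm, rfl⟩

end SimpleGraph

theorem fst_eq_or_snd_eq_of_mem_of_mem {V : Type*} {P : V → Bool} {p q : V × V} {w : V}
    (hp₁ : P p.1 = true) (hp₂ : P p.2 = false) (hq₁ : P q.1 = true) (hq₂ : P q.2 = false)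
    (hwp : w ∈ s(p.1, p.2)) (hwq : w ∈ s(q.1, q.2)) : p.1 = q.1 ∨ p.2 = q.2 := by
  rw [Sym2.mem_iff] at hwp hwq
  rcases hwp with rfl | rfl <;> rcases hwq with h | h <;> simp_all

/-- König's theorem: a bipartite simple graph with all degrees at most `k`
has a proper edge coloring with `k` colors. -/
theorem konig_edge_coloring {V : Type*} [Fintype V] (G : SimpleGraph V)
    [DecidableRel G.Adj] {k : ℕ}
    (hbip : ∃ P : V → Bool, ∀ u v, G.Adj u v → P u ≠ P v)
    (hdeg : ∀ v, G.degree v ≤ k) :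
    ∃ c : G.edgeSet → Fin k, IsProperEdgeColoring G c := by
  classical
  obtain ⟨P, hP⟩ := hbip
  let E : Finset (V × V) := {p | G.Adj p.1 p.2 ∧ P p.1 = true}
  have hE : ∀ p ∈ E, G.Adj p.1 p.2 := fun p hp => (mem_filter.1 hp).2.1
  obtain ⟨c, hck, hc⟩ := exists_isProperColoringOn_lt E
    (fun a => (G.card_filter_fst_eq_le_degree hE a).trans (hdeg a))
    (fun b => (G.card_filter_snd_eq_le_degree hE b).trans (hdeg b))
  choose o hoAdj hoP₁ hoP₂ hoe using fun e : G.edgeSet =>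
    G.exists_orientation_of_two_coloring hP e.2
  have hoE (e : G.edgeSet) : o e ∈ E := mem_filter.2 ⟨mem_univ _, hoAdj e, hoP₁ e⟩
  refine ⟨fun e => ⟨c (o e), hck _ (hoE e)⟩, fun e₁ e₂ hne ⟨w, hw₁, hw₂⟩ heq => hne ?_⟩
  have hadj := fst_eq_or_snd_eq_of_mem_of_mem (hoP₁ e₁) (hoP₂ e₁) (hoP₁ e₂) (hoP₂ e₂)
    ((hoe e₁).symm ▸ hw₁) ((hoe e₂).symm ▸ hw₂)
  have ho := hc _ (hoE e₁) _ (hoE e₂) hadj (Fin.mk.inj_iff.1 heq)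
  exact Subtype.ext ((hoe e₁).symm.trans (ho ▸ hoe e₂))
end

section
/- If every vertex of a simple graph has at most k neighbors, then the graph has a proper edge coloring using k + 1 colors. -/
namespace SimpleGraph

section MaxDegreeTwo

variable {W : Type*} {H : SimpleGraph W}

lemma Walk.IsPath.adj_getVert_pred_succ {u v : W} {p : H.Walk u v} (hp : p.IsPath) {i : ℕ}
    (h0 : i ≠ 0) (hi : i < p.length) :
    H.Adj (p.getVert i) (p.getVert (i - 1)) ∧ H.Adj (p.getVert i) (p.getVert (i + 1)) ∧
      p.getVert (i - 1) ≠ p.getVert (i + 1) := by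
  refine ⟨?_, p.adj_getVert_succ hi, fun h => ?_⟩
  · have := p.adj_getVert_succ (i := i - 1) (by omega)
    rwa [Nat.sub_add_cancel (Nat.pos_of_ne_zero h0), adj_comm] at this
  · have := hp.getVert_injOn (by simp only [Set.mem_ofPred_eq]; omega)
      (by simp only [Set.mem_ofPred_eq]; omega) h
    omega

/-- In a graph of maximum degree at most two, a connected component contains at most two
vertices of degree at most one. -/
lemma eq_or_eq_of_reachable_of_subsingleton
    (hdeg : ∀ v w₁ w₂ w₃, H.Adj v w₁ → H.Adj v w₂ → H.Adj v w₃ →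
      w₁ = w₂ ∨ w₁ = w₃ ∨ w₂ = w₃)
    {a b x : W} (ha : (H.neighborSet a).Subsingleton) (hb : (H.neighborSet b).Subsingleton)
    (hx : (H.neighborSet x).Subsingleton) (hab : a ≠ b) (hrab : H.Reachable a b)
    (hrax : H.Reachable a x) : x = a ∨ x = b := by
  obtain ⟨p, hp⟩ := hrab.exists_isPath
  have hlen : p.length ≠ 0 := fun h => hab (p.eq_of_length_eq_zero h)
  have hclosed : ∀ u ∈ p.support, ∀ z, H.Adj u z → z ∈ p.support := by
    intro u hu z hz
    obtain ⟨i, rfl, hi⟩ := Walk.mem_support_iff_exists_getVert.mp hu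
    rcases Nat.eq_zero_or_pos i with rfl | hi0
    · have h1 := p.adj_getVert_succ (i := 0) (by omega)
      rw [p.getVert_zero] at hz h1
      rw [ha hz h1]
      exact p.getVert_mem_support _
    rcases hi.eq_or_lt with rfl | hil
    · have hpen := p.adj_getVert_succ (i := p.length - 1) (by omega)
      rw [Nat.sub_add_cancel (by omega)] at hpen
      rw [p.getVert_length] at hz hpen
      rw [hb hz hpen.symm]
      exact p.getVert_mem_support _
    obtain ⟨hpred, hsucc, hne⟩ := hp.adj_getVert_pred_succ hi0.ne' hil
    rcases hdeg _ _ _ _ hz hpred hsucc with rfl | rfl | h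
    · exact p.getVert_mem_support _
    · exact p.getVert_mem_support _
    · exact absurd h hne
  have hxp : x ∈ p.support := by
    have hr := (reachable_iff_reflTransGen a x).mp hrax
    clear hx hrax
    induction hr with
    | refl => exact p.start_mem_support
    | tail _ h ih => exact hclosed _ ih _ h
  by_contra! hxab
  obtain ⟨i, rfl, hi⟩ := Walk.mem_support_iff_exists_getVert.mp hxp
  have hi0 : i ≠ 0 := fun h => hxab.1 (by simp [h])
  have hil : i < p.length := hi.lt_of_ne fun h => hxab.2 (by simp [h])
  obtain ⟨hpred, hsucc, hne⟩ := hp.adj_getVert_pred_succ hi0 hil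
  exact hne (hx hpred hsucc)

end MaxDegreeTwo

variable {V α : Type*} {G : SimpleGraph V}

/-- `c u v = c v u` is the colour of the edge `uv`, `none` meaning uncoloured. -/
structure IsPartialEdgeColoring (G : SimpleGraph V) (c : V → V → Option α) : Prop where
  symm (u v : V) : c u v = c v u
  adj {u v : V} {a : α} : c u v = some a → G.Adj u v
  inj {u v w : V} {a : α} : c u v = some a → c u w = some a → v = w

def IsMissingColor (c : V → V → Option α) (v : V) (a : α) : Prop :=
  ∀ w, c v w ≠ some a

def coloredPairs (c : V → V → Option α) : Set (V × V) :=
  {p | c p.1 p.2 ≠ none}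

lemma IsPartialEdgeColoring.empty : G.IsPartialEdgeColoring fun _ _ => (none : Option α) :=
  ⟨fun _ _ => rfl, nofun, nofun⟩

lemma IsPartialEdgeColoring.exists_isMissingColor [Fintype α] {c : V → V → Option α}
    (hc : G.IsPartialEdgeColoring c) (v : V) [Fintype (G.neighborSet v)]
    (hv : G.degree v < Fintype.card α) : ∃ a, IsMissingColor c v a := by
  by_contra! h
  simp only [IsMissingColor, not_forall, not_not] at h
  choose g hg using h
  have hinj : Function.Injective fun a => (⟨g a, hc.adj (hg a)⟩ : G.neighborSet v) :=
    fun a b hab => Option.some_injective α <| (hg a).symm.trans <|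
      (congrArg (c v ∘ Subtype.val) hab).trans (hg b)
  have := Fintype.card_le_of_injective _ hinj
  rw [card_neighborSet_eq_degree] at this
  omega

section setColor

open Classical in
noncomputable def setColor (c : V → V → Option α) (x w : V) (γ : α) :
    V → V → Option α :=
  fun u v => if s(u, v) = s(x, w) then some γ else c u v

variable {c : V → V → Option α} {x w : V} {γ : α}

lemma setColor_self : setColor c x w γ x w = some γ :=
  if_pos rfl

lemma setColor_of_ne {u : V} (hx : u ≠ x) (hw : u ≠ w) (v : V) :
    setColor c x w γ u v = c u v :=
  if_neg fun h => by
    rcases Sym2.mem_iff.mp (h ▸ Sym2.mem_mk_left u v) with h' | h'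
    exacts [hx h', hw h']

lemma setColor_left_of_ne {v : V} (hv : v ≠ w) : setColor c x w γ x v = c x v :=
  if_neg fun h => hv (Sym2.congr_right.mp h)

lemma coloredPairs_subset_setColor : coloredPairs c ⊆ coloredPairs (setColor c x w γ) := by
  intro p hp
  simp only [coloredPairs, setColor, Set.mem_ofPred_eq] at hp ⊢
  split_ifs
  exacts [Option.some_ne_none γ, hp]

lemma IsPartialEdgeColoring.setColor (hc : G.IsPartialEdgeColoring c) (hxw : G.Adj x w)
    (hx : IsMissingColor c x γ) (hw : IsMissingColor c w γ) :
    G.IsPartialEdgeColoring (setColor c x w γ) := by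
  have hmiss {u v : V} (huv : s(u, v) = s(x, w)) : IsMissingColor c u γ := by
    rcases Sym2.mem_iff.mp (huv ▸ Sym2.mem_mk_left u v) with rfl | rfl
    exacts [hx, hw]
  refine ⟨fun u v => by rw [SimpleGraph.setColor, Sym2.eq_swap, hc.symm u v]; rfl, ?_, ?_⟩
  · intro u v a h
    simp only [SimpleGraph.setColor] at h
    split_ifs at h with huv
    · rwa [← mem_edgeSet, huv]
    · exact hc.adj h
  · intro u v v' a h h'
    simp only [SimpleGraph.setColor] at h h'
    split_ifs at h h' with huv huv' huv'
    · exact Sym2.congr_right.mp (huv.trans huv'.symm)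
    · exact absurd (h.symm ▸ h') (hmiss huv v')
    · exact absurd (h'.symm ▸ h) (hmiss huv' v)
    · exact hc.inj h h'

lemma IsPartialEdgeColoring.isMissingColor_setColor (hc : G.IsPartialEdgeColoring c) {a : α}
    (h : c x w = some a) (hγ : IsMissingColor c x γ) :
    IsMissingColor (SimpleGraph.setColor c x w γ) x a := by
  intro v hv
  simp only [SimpleGraph.setColor] at hv
  split_ifs at hv with hvw
  · exact hγ w (h.trans hv.symm)
  · exact hvw (by rw [hc.inj hv h])

end setColor

section recolorOn

open Classical in
noncomputable def recolorOn (c : V → V → Option α) (S : Set V) (σ : Equiv.Perm α) :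
    V → V → Option α :=
  fun u v => if u ∈ S then (c u v).map σ else c u v

variable {c : V → V → Option α} {S : Set V} {σ : Equiv.Perm α}

lemma recolorOn_of_mem {u : V} (hu : u ∈ S) (v : V) : recolorOn c S σ u v = (c u v).map σ :=
  if_pos hu

lemma recolorOn_of_notMem {u : V} (hu : u ∉ S) (v : V) : recolorOn c S σ u v = c u v :=
  if_neg hu

lemma coloredPairs_recolorOn : coloredPairs (recolorOn c S σ) = coloredPairs c := by
  ext ⟨u, v⟩
  by_cases hu : u ∈ S <;> simp [coloredPairs, recolorOn_of_mem, recolorOn_of_notMem, hu]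

lemma IsPartialEdgeColoring.recolorOn (hc : G.IsPartialEdgeColoring c)
    (hS : ∀ {u w a}, u ∈ S → c u w = some a → σ a ≠ a → w ∈ S) :
    G.IsPartialEdgeColoring (recolorOn c S σ) := by
  have hfix {u v : V} (hu : u ∈ S) (hv : v ∉ S) : (c u v).map σ = c u v := by
    cases h : c u v with
    | none => rfl
    | some a => exact congrArg some (by_contra fun ha => hv (hS hu h ha))
  refine ⟨fun u v => ?_, fun {u v a} h => ?_, fun {u v w a} h h' => ?_⟩
  · by_cases hu : u ∈ S <;> by_cases hv : v ∈ S
    · rw [recolorOn_of_mem hu, recolorOn_of_mem hv, hc.symm]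
    · rw [recolorOn_of_mem hu, recolorOn_of_notMem hv, hfix hu hv, hc.symm]
    · rw [recolorOn_of_notMem hu, recolorOn_of_mem hv, hfix hv hu, hc.symm]
    · rw [recolorOn_of_notMem hu, recolorOn_of_notMem hv, hc.symm]
  · by_cases hu : u ∈ S
    · rw [recolorOn_of_mem hu, Option.map_eq_some_iff] at h
      obtain ⟨b, hb, -⟩ := h
      exact hc.adj hb
    · exact hc.adj (by rwa [recolorOn_of_notMem hu] at h)
  · by_cases hu : u ∈ S
    · rw [recolorOn_of_mem hu] at h h'
      obtain ⟨b, hb, -⟩ := Option.map_eq_some_iff.mp h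
      exact hc.inj hb (Option.map_injective σ.injective (h'.trans h.symm) ▸ hb)
    · rw [recolorOn_of_notMem hu] at h h'
      exact hc.inj h h'

end recolorOn

structure IsFan (G : SimpleGraph V) (c : V → V → Option α) (x : V) (f : ℕ → V) (n : ℕ) :
    Prop where
  injOn : Set.InjOn f (Set.Iic n)
  adj {i : ℕ} : i ≤ n → G.Adj x (f i)
  missing {i : ℕ} : i < n → ∃ a, c x (f (i + 1)) = some a ∧ IsMissingColor c (f i) a

namespace IsFan

variable {c : V → V → Option α} {x : V} {f : ℕ → V} {n : ℕ}

lemma ne_of_lt (hf : G.IsFan c x f n) {i j : ℕ} (hij : i < j) (hj : j ≤ n) : f i ≠ f j :=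
  fun h => hij.ne (hf.injOn (Set.mem_Iic.mpr (by omega)) (Set.mem_Iic.mpr hj) h)

lemma mono {m : ℕ} (hf : G.IsFan c x f n) (hmn : m ≤ n) : G.IsFan c x f m :=
  ⟨hf.injOn.mono (Set.Iic_subset_Iic.mpr hmn), fun hi => hf.adj (hi.trans hmn),
    fun hi => hf.missing (hi.trans_le hmn)⟩

lemma length_lt_degree (hf : G.IsFan c x f n) [Fintype (G.neighborSet x)] :
    n < G.degree x := by
  have hinj : Function.Injective
      fun i : Fin (n + 1) => (⟨f i, hf.adj (by omega)⟩ : G.neighborSet x) :=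
    fun i j h => Fin.ext <| hf.injOn (Set.mem_Iic.mpr (by omega)) (Set.mem_Iic.mpr (by omega))
      (congrArg Subtype.val h)
  have := Fintype.card_le_of_injective _ hinj
  rw [Fintype.card_fin, card_neighborSet_eq_degree] at this
  omega

lemma update (hc : G.IsPartialEdgeColoring c) (hf : G.IsFan c x f n) {z : V} {β : α}
    (hz : c x z = some β) (hβ : IsMissingColor c (f n) β) (hzf : ∀ i ≤ n, f i ≠ z) :
    G.IsFan c x (Function.update f (n + 1) z) (n + 1) := by
  have hg {i : ℕ} (hi : i ≤ n) : Function.update f (n + 1) z i = f i :=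
    Function.update_of_ne (by omega) _ _
  refine ⟨fun i hi j hj hij => ?_, fun {i} hi => ?_, fun {i} hi => ?_⟩
  · simp only [Set.mem_Iic] at hi hj
    rcases hi.eq_or_lt with rfl | hi <;> rcases hj.eq_or_lt with rfl | hj
    · rfl
    · rw [Function.update_self, hg (by omega)] at hij
      exact absurd hij.symm (hzf j (by omega))
    · rw [Function.update_self, hg (by omega)] at hij
      exact absurd hij (hzf i (by omega))
    · rw [hg (by omega), hg (by omega)] at hij
      exact hf.injOn (Set.mem_Iic.mpr (by omega)) (Set.mem_Iic.mpr (by omega)) hij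
  · rcases hi.eq_or_lt with rfl | hi
    · rw [Function.update_self]
      exact hc.adj hz
    · rw [hg (by omega)]
      exact hf.adj (by omega)
  · rcases (Nat.lt_succ_iff.mp hi).eq_or_lt with rfl | hi
    · rw [Function.update_self, hg le_rfl]
      exact ⟨β, hz, hβ⟩
    · rw [hg (by omega), hg (by omega)]
      exact hf.missing hi

lemma setColor {γ : α} (hf : G.IsFan c x f (n + 1)) :
    G.IsFan (setColor c x (f (n + 1)) γ) x f n where
  injOn := (hf.mono n.le_succ).injOn
  adj hi := hf.adj (by omega)
  missing {i} hi := by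
    obtain ⟨a, ha, hmiss⟩ := hf.missing (by omega : i < n + 1)
    refine ⟨a, by rwa [setColor_left_of_ne (hf.ne_of_lt (by omega) le_rfl)], fun v => ?_⟩
    rw [setColor_of_ne (hf.adj (by omega)).ne' (hf.ne_of_lt (by omega) le_rfl)]
    exact hmiss v

lemma exists_rotate (hc : G.IsPartialEdgeColoring c) (hf : G.IsFan c x f n) {γ : α}
    (hx : IsMissingColor c x γ) (hn : IsMissingColor c (f n) γ) :
    ∃ c' : V → V → Option α, G.IsPartialEdgeColoring c' ∧
      coloredPairs c ⊆ coloredPairs c' ∧ (x, f 0) ∈ coloredPairs c' := by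
  induction n generalizing c γ with
  | zero =>
    refine ⟨_, hc.setColor (hf.adj le_rfl) hx hn, coloredPairs_subset_setColor, ?_⟩
    simp [coloredPairs, setColor_self]
  | succ n ih =>
    obtain ⟨a, ha, hna⟩ := hf.missing n.lt_succ_self
    have hna' : IsMissingColor (SimpleGraph.setColor c x (f (n + 1)) γ) (f n) a := fun v => by
      rw [setColor_of_ne (hf.adj (by omega)).ne' (hf.ne_of_lt n.lt_succ_self le_rfl)]
      exact hna v
    obtain ⟨c', hc', hsub, hmem⟩ := ih (hc.setColor (hf.adj le_rfl) hx hn) hf.setColor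
      (hc.isMissingColor_setColor ha hx) hna'
    exact ⟨c', hc', coloredPairs_subset_setColor.trans hsub, hmem⟩

lemma recolorOn {S : Set V} {σ : Equiv.Perm α} (hf : G.IsFan c x f n) (hxS : x ∉ S)
    (hfix : ∀ i < n, f i ∈ S → ∀ a, c x (f (i + 1)) = some a → σ a = a) :
    G.IsFan (recolorOn c S σ) x f n := by
  refine ⟨hf.injOn, hf.adj, fun {i} hi => ?_⟩
  obtain ⟨a, ha, hmiss⟩ := hf.missing hi
  refine ⟨a, by rwa [recolorOn_of_notMem hxS], fun w hw => ?_⟩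
  by_cases hfi : f i ∈ S
  · rw [recolorOn_of_mem hfi, Option.map_eq_some_iff] at hw
    obtain ⟨b, hb, hσb⟩ := hw
    rw [← hfix i hi hfi a ha, σ.injective.eq_iff] at hσb
    exact hmiss w (hσb ▸ hb)
  · exact hmiss w (by rwa [recolorOn_of_notMem hfi] at hw)

end IsFan

lemma IsPartialEdgeColoring.exists_maximal_isFan [G.LocallyFinite] {c : V → V → Option α}
    (hc : G.IsPartialEdgeColoring c) {x y : V} (hxy : G.Adj x y) :
    ∃ f n, f 0 = y ∧ G.IsFan c x f n ∧
      ∀ z β, c x z = some β → IsMissingColor c (f n) β → ∃ i ≤ n, f i = z := by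
  classical
  let P n := ∃ f : ℕ → V, f 0 = y ∧ G.IsFan c x f n
  have h0 : P 0 := ⟨fun _ => y, rfl, fun i hi j hj _ => by simp_all, fun _ => hxy,
    fun h => absurd h (Nat.not_lt_zero _)⟩
  obtain ⟨f, hf0, hf⟩ := Nat.findGreatest_spec (P := P) (Nat.zero_le (G.degree x)) h0
  refine ⟨f, _, hf0, hf, fun z β hz hβ => ?_⟩
  by_contra! hzf
  have hP : P (Nat.findGreatest P (G.degree x) + 1) :=
    ⟨_, by rw [Function.update_of_ne (by omega)]; exact hf0, hf.update hc hz hβ hzf⟩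
  exact Nat.findGreatest_is_greatest (Nat.lt_succ_self _)
    hP.choose_spec.2.length_lt_degree.le hP

/-- Its connected components are the `a`/`b` Kempe chains. -/
def kempeGraph (c : V → V → Option α) (a b : α) : SimpleGraph V :=
  SimpleGraph.fromRel fun u v => c u v = some a ∨ c u v = some b

namespace IsPartialEdgeColoring

variable {c : V → V → Option α} {a b : α}

lemma kempeGraph_adj (hc : G.IsPartialEdgeColoring c) {u v : V} :
    (kempeGraph c a b).Adj u v ↔ c u v = some a ∨ c u v = some b := by
  rw [kempeGraph, fromRel_adj, hc.symm v u, or_self]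
  exact ⟨And.right, fun h => ⟨(h.elim hc.adj hc.adj).ne, h⟩⟩

lemma kempeGraph_adj_three (hc : G.IsPartialEdgeColoring c) {v w₁ w₂ w₃ : V}
    (h₁ : (kempeGraph c a b).Adj v w₁) (h₂ : (kempeGraph c a b).Adj v w₂)
    (h₃ : (kempeGraph c a b).Adj v w₃) : w₁ = w₂ ∨ w₁ = w₃ ∨ w₂ = w₃ := by
  rw [hc.kempeGraph_adj] at h₁ h₂ h₃
  rcases h₁ with h₁ | h₁ <;> rcases h₂ with h₂ | h₂ <;> rcases h₃ with h₃ | h₃ <;>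
    first
      | exact .inl (hc.inj h₁ h₂)
      | exact .inr (.inl (hc.inj h₁ h₃))
      | exact .inr (.inr (hc.inj h₂ h₃))

lemma subsingleton_neighborSet_kempeGraph (hc : G.IsPartialEdgeColoring c) {v : V}
    (hv : IsMissingColor c v a ∨ IsMissingColor c v b) :
    ((kempeGraph c a b).neighborSet v).Subsingleton := by
  intro w₁ h₁ w₂ h₂
  rw [mem_neighborSet, hc.kempeGraph_adj] at h₁ h₂
  rcases hv with hv | hv <;> rcases h₁ with h₁ | h₁ <;> rcases h₂ with h₂ | h₂ <;>
    first
      | exact hc.inj h₁ h₂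
      | exact absurd h₁ (hv _)
      | exact absurd h₂ (hv _)

lemma recolorOn_kempeChain [DecidableEq α] (hc : G.IsPartialEdgeColoring c) (v : V) :
    G.IsPartialEdgeColoring
      (SimpleGraph.recolorOn c {u | (kempeGraph c a b).Reachable v u} (.swap a b)) := by
  refine hc.recolorOn fun {u w d} hu hd hσ => hu.trans (Adj.reachable ?_)
  rw [hc.kempeGraph_adj]
  by_contra! h
  exact hσ (Equiv.swap_apply_of_ne_of_ne (fun h' => h.1 (h' ▸ hd)) fun h' => h.2 (h' ▸ hd))

lemma exists_isFan_of_kempe_swap [DecidableEq α] (hc : G.IsPartialEdgeColoring c) {x : V}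
    {f : ℕ → V} {n j : ℕ} (hf : G.IsFan c x f n) (ha : IsMissingColor c x a)
    (hbn : IsMissingColor c (f n) b) (hj : j < n) (hb : c x (f (j + 1)) = some b) :
    ∃ (c' : V → V → Option α) (i : ℕ), G.IsPartialEdgeColoring c' ∧
      coloredPairs c' = coloredPairs c ∧ G.IsFan c' x f i ∧
      IsMissingColor c' x a ∧ IsMissingColor c' (f i) a := by
  obtain ⟨b', hb', hbj⟩ := hf.missing hj
  rw [hb, Option.some_inj] at hb'
  subst hb'
  let K := kempeGraph c a b
  have hK {v : V} (hv : IsMissingColor c v a ∨ IsMissingColor c v b) :=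
    hc.subsingleton_neighborSet_kempeGraph hv
  -- `x`, `f j` and `f n` are ends of Kempe chains, and no chain has three ends.
  obtain ⟨i, hin, hbi, hix, hij⟩ : ∃ i ≤ n, IsMissingColor c (f i) b ∧
      ¬ K.Reachable (f i) x ∧ (j < i → ¬ K.Reachable (f i) (f j)) := by
    by_cases hjx : K.Reachable (f j) x
    · have hnx : ¬ K.Reachable (f n) x := fun hnx => by
        rcases eq_or_eq_of_reachable_of_subsingleton (fun _ _ _ _ => hc.kempeGraph_adj_three)
          (hK (.inr hbj)) (hK (.inr hbn)) (hK (.inl ha)) (hf.ne_of_lt hj le_rfl)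
          (hjx.trans hnx.symm) hjx with h | h
        exacts [(hf.adj hj.le).ne h, (hf.adj le_rfl).ne h]
      exact ⟨n, le_rfl, hbn, hnx, fun _ hnj => hnx (hnj.trans hjx)⟩
    · exact ⟨j, hj.le, hbj, hjx, fun h => absurd h (lt_irrefl j)⟩
  let S := {u | K.Reachable (f i) u}
  have hxS : x ∉ S := hix
  refine ⟨SimpleGraph.recolorOn c S (.swap a b), i, hc.recolorOn_kempeChain (f i),
    coloredPairs_recolorOn, (hf.mono hin).recolorOn hxS fun h hh hS d hd => ?_,
    fun w => by rw [recolorOn_of_notMem hxS]; exact ha w, fun w hw => ?_⟩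
  · refine Equiv.swap_apply_of_ne_of_ne (by rintro rfl; exact ha _ hd) ?_
    rintro rfl
    obtain rfl : h = j := by
      by_contra hhj
      exact (hf.injOn.ne (Set.mem_Iic.mpr (by omega)) (Set.mem_Iic.mpr (by omega)) (by omega))
        (hc.inj hd hb)
    exact hij hh hS
  · rw [recolorOn_of_mem (show f i ∈ S from Reachable.refl _), Option.map_eq_some_iff] at hw
    obtain ⟨d, hd, hσd⟩ := hw
    rw [Equiv.swap_apply_eq_iff, Equiv.swap_apply_left] at hσd
    exact hbi w (hσd ▸ hd)

lemma exists_extend [G.LocallyFinite] [Fintype α] (hc : G.IsPartialEdgeColoring c)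
    (hdeg : ∀ v, G.degree v < Fintype.card α) {x y : V} (hxy : G.Adj x y)
    (hnone : c x y = none) :
    ∃ c' : V → V → Option α, G.IsPartialEdgeColoring c' ∧
      coloredPairs c ⊆ coloredPairs c' ∧ (x, y) ∈ coloredPairs c' := by
  classical
  obtain ⟨f, n, rfl, hf, hmax⟩ := hc.exists_maximal_isFan hxy
  obtain ⟨a, ha⟩ := hc.exists_isMissingColor x (hdeg x)
  obtain ⟨b, hb⟩ := hc.exists_isMissingColor (f n) (hdeg (f n))
  by_cases hbx : IsMissingColor c x b
  · exact hf.exists_rotate hc hbx hb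
  obtain ⟨z, hz⟩ : ∃ z, c x z = some b := by simpa [IsMissingColor] using hbx
  obtain ⟨i, hin, rfl⟩ := hmax z b hz hb
  obtain ⟨j, rfl⟩ : ∃ j, i = j + 1 :=
    Nat.exists_eq_succ_of_ne_zero fun h => by simp [h, hnone] at hz
  obtain ⟨c', i, hc', hcol, hf', ha', hai⟩ :=
    hc.exists_isFan_of_kempe_swap hf ha hb (by omega) hz
  obtain ⟨c'', hc'', hsub, hmem⟩ := hf'.exists_rotate hc' ha' hai
  exact ⟨c'', hc'', hcol ▸ hsub, hmem⟩

lemma isProperEdgeColoring (hc : G.IsPartialEdgeColoring c)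
    (htot : ∀ ⦃u v⦄, G.Adj u v → c u v ≠ none) (a₀ : α) :
    IsProperEdgeColoring G fun e : G.edgeSet => (Sym2.lift ⟨c, hc.symm⟩ e.1).getD a₀ := by
  rintro ⟨e₁, he₁⟩ ⟨e₂, he₂⟩ hne ⟨v, hv₁, hv₂⟩ heq
  obtain ⟨w₁, rfl⟩ := Sym2.mem_iff_exists.mp hv₁
  obtain ⟨w₂, rfl⟩ := Sym2.mem_iff_exists.mp hv₂
  obtain ⟨a₁, ha₁⟩ := Option.ne_none_iff_exists'.mp (htot (show G.Adj v w₁ from he₁))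
  obtain ⟨a₂, ha₂⟩ := Option.ne_none_iff_exists'.mp (htot (show G.Adj v w₂ from he₂))
  simp only [Sym2.lift_mk, ha₁, ha₂, Option.getD_some] at heq
  subst heq
  obtain rfl := hc.inj ha₁ ha₂
  exact hne rfl

end IsPartialEdgeColoring

theorem exists_isPartialEdgeColoring_ne_none [Finite V] [G.LocallyFinite] [Fintype α]
    (hdeg : ∀ v, G.degree v < Fintype.card α) :
    ∃ c : V → V → Option α, G.IsPartialEdgeColoring c ∧
      ∀ ⦃u v⦄, G.Adj u v → c u v ≠ none := by
  obtain ⟨c, hc, hmax⟩ :=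
    Set.exists_max_image {c : V → V → Option α | G.IsPartialEdgeColoring c}
      (fun c => (coloredPairs c).ncard) (Set.toFinite _) ⟨_, IsPartialEdgeColoring.empty⟩
  refine ⟨c, hc, fun x y hxy hnone => ?_⟩
  obtain ⟨c', hc', hsub, hxy'⟩ := hc.exists_extend hdeg hxy hnone
  have hss : coloredPairs c ⊂ coloredPairs c' :=
    (Set.ssubset_iff_of_subset hsub).mpr ⟨_, hxy', fun h => h hnone⟩
  exact (Set.ncard_lt_ncard hss (Set.toFinite _)).not_ge (hmax c' hc')

end SimpleGraph

/-- Vizing's theorem: a simple graph with all degrees at most `k`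
has a proper edge coloring with `k + 1` colors. -/
theorem vizing_edge_coloring {V : Type*} [Fintype V] (G : SimpleGraph V)
    [DecidableRel G.Adj] {k : ℕ}
    (hdeg : ∀ v, G.degree v ≤ k) :
    ∃ c : G.edgeSet → Fin (k + 1), IsProperEdgeColoring G c := by
  have hdeg' (v : V) : G.degree v < Fintype.card (Fin (k + 1)) := by
    rw [Fintype.card_fin]
    exact Nat.lt_succ_of_le (hdeg v)
  obtain ⟨c, hc, htot⟩ := G.exists_isPartialEdgeColoring_ne_none hdeg'
  exact ⟨_, hc.isProperEdgeColoring htot 0⟩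
end

section
/- Let c be a proper edge coloring of a simple graph G, let a and b be two distinct colors, and let H be the spanning subgraph of G whose edges are exactly the edges of G colored a or b by c. For any connected component W of H, the coloring c' obtained from c by swapping the colors a and b on every edge of H whose endpoints lie in W (and leaving all other edges unchanged) is again a proper edge coloring of G. -/
/-- Swapping two colors `a` and `b` on the edges of a connected component `W` of the
spanning subgraph `H` of `G` consisting of the edges colored `a` or `b` yields
another proper edge coloring of `G`. -/
theorem swap_colors_on_component {V α : Type*} (G : SimpleGraph V)
    (c : G.edgeSet → α) (hc : IsProperEdgeColoring G c)
    (a b : α) (hab : a ≠ b)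
    (H : SimpleGraph V)
    (hH : ∀ u v, H.Adj u v ↔
      ∃ h : G.Adj u v, c ⟨s(u, v), h⟩ = a ∨ c ⟨s(u, v), h⟩ = b)
    (W : H.ConnectedComponent)
    (c' : G.edgeSet → α)
    (hswap : ∀ (u v : V) (h : G.Adj u v),
      ((H.Adj u v ∧ H.connectedComponentMk u = W) →
        ((c ⟨s(u, v), h⟩ = a → c' ⟨s(u, v), h⟩ = b) ∧
         (c ⟨s(u, v), h⟩ = b → c' ⟨s(u, v), h⟩ = a))) ∧
      (¬ (H.Adj u v ∧ H.connectedComponentMk u = W) →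
        c' ⟨s(u, v), h⟩ = c ⟨s(u, v), h⟩)) :
    IsProperEdgeColoring G c' := by
  classical
  rintro e₁ e₂ hne ⟨v, hv1, hv2⟩
  obtain ⟨w₁, hw₁⟩ := Sym2.mem_iff_exists.mp hv1
  obtain ⟨w₂, hw₂⟩ := Sym2.mem_iff_exists.mp hv2
  have h₁ : G.Adj v w₁ := by rw [← G.mem_edgeSet, ← hw₁]; exact e₁.2
  have h₂ : G.Adj v w₂ := by rw [← G.mem_edgeSet, ← hw₂]; exact e₂.2
  have he₁ : e₁ = ⟨s(v, w₁), h₁⟩ := Subtype.ext hw₁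
  have he₂ : e₂ = ⟨s(v, w₂), h₂⟩ := Subtype.ext hw₂
  rw [he₁, he₂] at hne ⊢
  have hcne : c ⟨s(v, w₁), h₁⟩ ≠ c ⟨s(v, w₂), h₂⟩ :=
    hc _ _ hne ⟨v, Sym2.mem_mk_left v w₁, Sym2.mem_mk_left v w₂⟩
  by_cases hP₁ : H.Adj v w₁ ∧ H.connectedComponentMk v = W
  · by_cases hP₂ : H.Adj v w₂ ∧ H.connectedComponentMk v = W
    · -- both swapped
      obtain ⟨_, hc1⟩ := (hH v w₁).mp hP₁.1
      obtain ⟨_, hc2⟩ := (hH v w₂).mp hP₂.1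
      have hs₁ := ((hswap v w₁ h₁).1 hP₁)
      have hs₂ := ((hswap v w₂ h₂).1 hP₂)
      rcases hc1 with h1a | h1b <;> rcases hc2 with h2a | h2b
      · exact absurd (h1a.trans h2a.symm) hcne
      · rw [hs₁.1 h1a, hs₂.2 h2b]; exact hab.symm
      · rw [hs₁.2 h1b, hs₂.1 h2a]; exact hab
      · exact absurd (h1b.trans h2b.symm) hcne
    · -- e₁ swapped, e₂ not
      obtain ⟨_, hc1⟩ := (hH v w₁).mp hP₁.1
      have hs₁ := ((hswap v w₁ h₁).1 hP₁)
      have hs₂ := ((hswap v w₂ h₂).2 hP₂)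
      rw [hs₂]
      intro hEq
      apply hP₂
      refine ⟨(hH v w₂).mpr ⟨h₂, ?_⟩, hP₁.2⟩
      rcases hc1 with h1a | h1b
      · right; rw [← hEq, hs₁.1 h1a]
      · left; rw [← hEq, hs₁.2 h1b]
  · by_cases hP₂ : H.Adj v w₂ ∧ H.connectedComponentMk v = W
    · -- e₂ swapped, e₁ not
      obtain ⟨_, hc2⟩ := (hH v w₂).mp hP₂.1
      have hs₁ := ((hswap v w₁ h₁).2 hP₁)
      have hs₂ := ((hswap v w₂ h₂).1 hP₂)
      rw [hs₁]
      intro hEq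
      apply hP₁
      refine ⟨(hH v w₁).mpr ⟨h₁, ?_⟩, hP₂.2⟩
      rcases hc2 with h2a | h2b
      · right; rw [hEq, hs₂.1 h2a]
      · left; rw [hEq, hs₂.2 h2b]
    · -- neither swapped
      rw [(hswap v w₁ h₁).2 hP₁, (hswap v w₂ h₂).2 hP₂]
      exact hcne
end

section
/- Let k ≥ 1 and let F₁, …, F_k be finite sets of natural numbers. If the union F₁ ∪ ⋯ ∪ F_k has at least k elements, then there exists a nonempty subset S of the index set {1, …, k} and an injective function f defined on S with f(i) ∈ F_i for every i ∈ S, such that for every index j not in S and every i ∈ S, f(i) ∉ F_j. -/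
open Finset

lemma aux_reducible {ι : Type*} [DecidableEq ι] :
    ∀ (A : Finset ι) (F : ι → Finset ℕ), A.Nonempty → A.card ≤ (A.biUnion F).card →
    ∃ S ⊆ A, S.Nonempty ∧ ∃ f : ι → ℕ, Set.InjOn f ↑S ∧ (∀ i ∈ S, f i ∈ F i) ∧
      ∀ j ∈ A \ S, ∀ i ∈ S, f i ∉ F j := by
  classical
  intro A
  induction A using Finset.strongInduction with
  | _ A ih =>
    intro F hA hcard
    by_cases hhall : ∀ T ⊆ A, T.card ≤ (T.biUnion F).card
    · -- Hall's condition holds; take S = A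
      have hh : ∀ s : Finset {x // x ∈ A}, s.card ≤ (s.biUnion fun i => F i.val).card := by
        intro s
        have key : (s.image Subtype.val).biUnion F = s.biUnion fun i => F i.val := by
          ext y; simp
        have h1 := hhall (s.image Subtype.val) (by
          intro x hx
          obtain ⟨a, _, rfl⟩ := Finset.mem_image.mp hx
          exact a.2)
        rwa [Finset.card_image_of_injective _ Subtype.val_injective, key] at h1
      obtain ⟨f₀, hf₀inj, hf₀mem⟩ :=
        (Finset.all_card_le_biUnion_card_iff_exists_injective
          (fun i : {x // x ∈ A} => F i.val)).mp hh
      refine ⟨A, le_refl _, hA, fun i => if h : i ∈ A then f₀ ⟨i, h⟩ else 0, ?_, ?_, ?_⟩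
      · intro x hx y hy hxy
        rw [Finset.mem_coe] at hx hy
        simp only [dif_pos hx, dif_pos hy] at hxy
        exact congrArg Subtype.val (hf₀inj hxy)
      · intro i hi
        simp only [dif_pos hi]
        exact hf₀mem _
      · intro j hj; simp at hj
    · -- Hall fails: get T ⊆ A with |⋃ T| < |T|
      push_neg at hhall
      obtain ⟨T, hTA, hT⟩ := hhall
      have hTne : T.Nonempty := by
        by_contra h
        rw [Finset.not_nonempty_iff_eq_empty] at h
        simp [h] at hT
      have hBne : (A \ T).Nonempty := by
        rw [Finset.nonempty_iff_ne_empty]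
        intro h
        have hAT : A = T :=
          Finset.Subset.antisymm (by rwa [Finset.sdiff_eq_empty_iff_subset] at h) hTA
        rw [← hAT] at hT
        exact absurd hcard (not_le.mpr hT)
      set U := T.biUnion F with hU
      set B := A \ T with hB
      have hBss : B ⊂ A := Finset.sdiff_ssubset hTA hTne
      set F' : ι → Finset ℕ := fun i => F i \ U with hF'
      have hBcard : B.card ≤ (B.biUnion F').card := by
        have h1 : B.biUnion F' = (B.biUnion F) \ U := by
          ext y
          simp only [hF', Finset.mem_biUnion, Finset.mem_sdiff]
          tauto
        have h2 : A.biUnion F ⊆ (B.biUnion F) ∪ U := by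
          intro y hy
          simp only [Finset.mem_biUnion] at hy
          obtain ⟨i, hi, hyi⟩ := hy
          by_cases hiT : i ∈ T
          · exact Finset.mem_union_right _ (Finset.mem_biUnion.mpr ⟨i, hiT, hyi⟩)
          · exact Finset.mem_union_left _
              (Finset.mem_biUnion.mpr ⟨i, Finset.mem_sdiff.mpr ⟨hi, hiT⟩, hyi⟩)
        have h3 : A.card ≤ ((B.biUnion F) \ U).card + U.card := by
          calc A.card ≤ (A.biUnion F).card := hcard
            _ ≤ ((B.biUnion F) ∪ U).card := Finset.card_le_card h2
            _ = ((B.biUnion F) \ U).card + U.card := by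
                rw [Finset.card_sdiff_add_card]
        have h4 : A.card = B.card + T.card := by
          rw [hB, Finset.card_sdiff_of_subset hTA]
          have := Finset.card_le_card hTA
          omega
        rw [h1]
        omega
      obtain ⟨S, hSB, hSne, f, hfinj, hfmem, hfout⟩ := ih B hBss F' hBne hBcard
      refine ⟨S, hSB.trans hBss.subset, hSne, f, hfinj, ?_, ?_⟩
      · intro i hi
        exact (Finset.mem_sdiff.mp (hfmem i hi)).1
      · intro j hj i hi
        have hfU : f i ∉ U := (Finset.mem_sdiff.mp (hfmem i hi)).2
        rw [Finset.mem_sdiff] at hj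
        by_cases hjT : j ∈ T
        · intro hfj
          exact hfU (Finset.mem_biUnion.mpr ⟨j, hjT, hfj⟩)
        · have hjB : j ∈ B \ S := Finset.mem_sdiff.mpr ⟨Finset.mem_sdiff.mpr ⟨hj.1, hjT⟩, hj.2⟩
          have hout := hfout j hjB i hi
          intro hfj
          exact hout (Finset.mem_sdiff.mpr ⟨hfj, hfU⟩)

/-- If `k ≥ 1` stacks together carry at least `k` distinct numbers, then there is a
nonempty set `S` of stacks and a choice of differently numbered cards, one from each
stack in `S`, such that the chosen numbers appear on no stack outside `S`. -/
theorem reducible_position {k : ℕ} (hk : 1 ≤ k) (F : Fin k → Finset ℕ)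
    (hunion : k ≤ (Finset.univ.biUnion F).card) :
    ∃ S : Finset (Fin k), S.Nonempty ∧
      ∃ f : Fin k → ℕ, Set.InjOn f ↑S ∧ (∀ i ∈ S, f i ∈ F i) ∧
        ∀ j, j ∉ S → ∀ i ∈ S, f i ∉ F j := by
  have hne : (Finset.univ : Finset (Fin k)).Nonempty := ⟨⟨0, hk⟩, Finset.mem_univ _⟩
  have hcard : (Finset.univ : Finset (Fin k)).card ≤ (Finset.univ.biUnion F).card := by
    simpa using hunion
  obtain ⟨S, hSA, hSne, f, hfinj, hfmem, hfout⟩ := aux_reducible Finset.univ F hne hcard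
  exact ⟨S, hSne, f, hfinj, hfmem, fun j hj i hi =>
    hfout j (Finset.mem_sdiff.mpr ⟨Finset.mem_univ _, hj⟩) i hi⟩
end
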